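/- The ES-LM flux with the low Mach number modification is entropy stable: for all admissible states q⁻, q⁺, every admissible intermediate state q_int, and every cut-off parameter M_cut ∈ [0,1], the flux F^{ES-LM}(q⁻, q⁺) := F*(q⁻, q⁺) − ½ Q_LM(q_int)(r(q⁺) − r(q⁻)) with Q_LM(q_int) := R |Λ|^Roe_LM S Rᵀ evaluated at q_int, |Λ|^Roe_LM := diag(|u−c̃|, |u|, |u|, |u+c̃|) and c̃ := c · max(min(M, 1), M_cut), M := √(u²+v²)/c, satisfies (r(q⁺) − r(q⁻)) · F^{ES-LM}(q⁻, q⁺) ≤ ρ⁺u⁺ − ρ⁻u⁻. -/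

import Mathlib

open Real Matrix

noncomputable section

/-- A state of the 2D compressible Euler equations: `(ρ, ρu, ρv, E)`. -/
abbrev EulerState := Fin 4 → ℝ

/-- Density. -/
def rho (q : EulerState) : ℝ := q 0
/-- x-momentum. -/
def mom1 (q : EulerState) : ℝ := q 1
/-- y-momentum. -/
def mom2 (q : EulerState) : ℝ := q 2
/-- Total energy. -/
def toten (q : EulerState) : ℝ := q 3
/-- Pressure `p = (γ-1)(E - (m₁² + m₂²)/(2ρ))`. -/
def pres (γ : ℝ) (q : EulerState) : ℝ :=
  (γ - 1) * (toten q - (mom1 q ^ 2 + mom2 q ^ 2) / (2 * rho q))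
/-- x-velocity `u = m₁/ρ`. -/
def uvel (q : EulerState) : ℝ := mom1 q / rho q
/-- y-velocity `v = m₂/ρ`. -/
def vvel (q : EulerState) : ℝ := mom2 q / rho q
/-- Admissible states: positive density and positive pressure. -/
def admissible (γ : ℝ) (q : EulerState) : Prop := 0 < rho q ∧ 0 < pres γ q
/-- Physical entropy `s = ln(p ρ^(-γ))`. -/
def entS (γ : ℝ) (q : EulerState) : ℝ := Real.log (pres γ q * rho q ^ (-γ))
/-- Entropy function `U = -ρ s/(γ-1)`. -/
def entU (γ : ℝ) (q : EulerState) : ℝ := -(rho q * entS γ q) / (γ - 1)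
/-- `β = ρ/(2p)`. -/
def betaCoef (γ : ℝ) (q : EulerState) : ℝ := rho q / (2 * pres γ q)
/-- Entropy variables `r(q)`. -/
def entVar (γ : ℝ) (q : EulerState) : EulerState :=
  ![(γ - entS γ q) / (γ - 1) - betaCoef γ q * (uvel q ^ 2 + vvel q ^ 2),
    2 * betaCoef γ q * uvel q,
    2 * betaCoef γ q * vvel q,
    -2 * betaCoef γ q]
/-- x-flux `f(q)`. -/
def fFlux (γ : ℝ) (q : EulerState) : EulerState :=
  ![rho q * uvel q,
    rho q * uvel q ^ 2 + pres γ q,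
    rho q * uvel q * vvel q,
    (toten q + pres γ q) * uvel q]
/-- y-flux `g(q)`. -/
def gFlux (γ : ℝ) (q : EulerState) : EulerState :=
  ![rho q * vvel q,
    rho q * uvel q * vvel q,
    rho q * vvel q ^ 2 + pres γ q,
    (toten q + pres γ q) * vvel q]
/-- x-entropy flux `φₓ = -ρ u s/(γ-1)`. -/
def phiX (γ : ℝ) (q : EulerState) : ℝ := -(rho q * uvel q * entS γ q) / (γ - 1)
/-- y-entropy flux `φ_y = -ρ v s/(γ-1)`. -/
def phiY (γ : ℝ) (q : EulerState) : ℝ := -(rho q * vvel q * entS γ q) / (γ - 1)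

/-- Logarithmic mean `(b-a)/(ln b - ln a)`, equal to `a` when `a = b`. -/
def logMean (a b : ℝ) : ℝ := if a = b then a else (b - a) / (Real.log b - Real.log a)

/-- The entropy conservative flux of Chandrashekar. -/
def chandrashekarFlux (γ : ℝ) (qm qp : EulerState) : EulerState :=
  let ρhat := logMean (rho qm) (rho qp)
  let ubar := (uvel qm + uvel qp) / 2
  let vbar := (vvel qm + vvel qp) / 2
  let βbar := (betaCoef γ qm + betaCoef γ qp) / 2
  let βhat := logMean (betaCoef γ qm) (betaCoef γ qp)
  let ρbar := (rho qm + rho qp) / 2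
  let ptil := ρbar / (2 * βbar)
  let vsqbar := (uvel qm ^ 2 + vvel qm ^ 2 + uvel qp ^ 2 + vvel qp ^ 2) / 2
  let Fρ := ρhat * ubar
  let Fρu := ubar * Fρ + ptil
  let Fρv := vbar * Fρ
  ![Fρ, Fρu, Fρv,
    (1 / (2 * (γ - 1) * βhat) - vsqbar / 2) * Fρ + ubar * Fρu + vbar * Fρv]

/-- Speed of sound `c = √(γ p/ρ)`. -/
def cSound (γ : ℝ) (q : EulerState) : ℝ := Real.sqrt (γ * pres γ q / rho q)
/-- Enthalpy `H = c²/(γ-1) + |v|²/2`. -/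
def enthalpyH (γ : ℝ) (q : EulerState) : ℝ :=
  cSound γ q ^ 2 / (γ - 1) + (uvel q ^ 2 + vvel q ^ 2) / 2
/-- The matrix `R` of right eigenvectors of the x-flux Jacobian. -/
def eigMat (γ : ℝ) (q : EulerState) : Matrix (Fin 4) (Fin 4) ℝ :=
  !![1, 1, 0, 1;
     uvel q - cSound γ q, uvel q, 0, uvel q + cSound γ q;
     vvel q, vvel q, -1, vvel q;
     enthalpyH γ q - cSound γ q * uvel q, (uvel q ^ 2 + vvel q ^ 2) / 2, -vvel q,
       enthalpyH γ q + cSound γ q * uvel q]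
/-- Barth's scaling matrix `S = diag(ρ/(2γ), (γ-1)ρ/γ, p, ρ/(2γ))`. -/
def scalMat (γ : ℝ) (q : EulerState) : Matrix (Fin 4) (Fin 4) ℝ :=
  Matrix.diagonal ![rho q / (2 * γ), (γ - 1) * rho q / γ, pres γ q, rho q / (2 * γ)]

/-- Entropy diffusion matrix `Q = R |Λ| S Rᵀ` for a diagonal `|Λ| = diag lam`. -/
def Qmat (γ : ℝ) (lam : Fin 4 → ℝ) (q : EulerState) : Matrix (Fin 4) (Fin 4) ℝ :=
  eigMat γ q * Matrix.diagonal lam * scalMat γ q * (eigMat γ q)ᵀ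

/-- Roe eigenvalues `(|u-c|, |u|, |u|, |u+c|)`. -/
def lamRoe (γ : ℝ) (q : EulerState) : Fin 4 → ℝ :=
  ![|uvel q - cSound γ q|, |uvel q|, |uvel q|, |uvel q + cSound γ q|]
/-- Kinetic energy stable eigenvalues `(|u|+c, |u|, |u|, |u|+c)`. -/
def lamKES (γ : ℝ) (q : EulerState) : Fin 4 → ℝ :=
  ![|uvel q| + cSound γ q, |uvel q|, |uvel q|, |uvel q| + cSound γ q]
/-- Local Mach number `M = |v|/c`. -/
def machNum (γ : ℝ) (q : EulerState) : ℝ :=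
  Real.sqrt (uvel q ^ 2 + vvel q ^ 2) / cSound γ q
/-- Rescaled speed of sound `c̃ = c max(min(M,1), M_cut)`. -/
def cTilde (γ Mcut : ℝ) (q : EulerState) : ℝ :=
  cSound γ q * max (min (machNum γ q) 1) Mcut
/-- Low Mach Roe eigenvalues `(|u-c̃|, |u|, |u|, |u+c̃|)`. -/
def lamRoeLM (γ Mcut : ℝ) (q : EulerState) : Fin 4 → ℝ :=
  ![|uvel q - cTilde γ Mcut q|, |uvel q|, |uvel q|, |uvel q + cTilde γ Mcut q|]
/-- Low Mach KES eigenvalues `(|u|+c̃, |u|, |u|, |u|+c̃)`. -/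
def lamKESLM (γ Mcut : ℝ) (q : EulerState) : Fin 4 → ℝ :=
  ![|uvel q| + cTilde γ Mcut q, |uvel q|, |uvel q|, |uvel q| + cTilde γ Mcut q]

/-!
The Chandrashekar flux is entropy conservative: writing `Δ` for jumps, the logarithmic means
satisfy `ρ̂ Δ(ln ρ) = Δρ` and `β̂ Δ(ln β) = Δβ`, and since `s = -(γ-1) ln ρ - ln β - ln 2`, the
contraction `Δr ⬝ F*` collapses, through the product rule `Δ(ab) = ā Δb + b̄ Δa`, to the jump
`Δ(ρu)` of the entropy potential. The dissipation then contributes `-½ Δr ⬝ Q Δr ≤ 0`, because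
`Q = R diag(|Λ| S) Rᵀ` is congruent to a diagonal matrix with nonnegative entries for any
nonnegative eigenvalue vector `|Λ|`.
-/

theorem logMean_mul_log_sub_log {a b : ℝ} (ha : 0 < a) (hb : 0 < b) :
    logMean a b * (Real.log b - Real.log a) = b - a := by
  unfold logMean
  split_ifs with h
  · simp [h]
  · have hlog : Real.log b - Real.log a ≠ 0 := fun hc =>
      h (Real.log_injOn_pos ha hb (sub_eq_zero.mp hc).symm)
    exact div_mul_cancel₀ _ hlog

theorem logMean_pos {a b : ℝ} (ha : 0 < a) (hb : 0 < b) : 0 < logMean a b := by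
  unfold logMean
  split_ifs with h
  · exact ha
  rcases lt_or_gt_of_ne h with hab | hab
  · exact div_pos (sub_pos.mpr hab) (sub_pos.mpr (Real.log_lt_log ha hab))
  · exact div_pos_of_neg_of_neg (sub_neg.mpr hab) (sub_neg.mpr (Real.log_lt_log hb hab))

theorem betaCoef_pos {γ : ℝ} {q : EulerState} (hq : admissible γ q) : 0 < betaCoef γ q :=
  div_pos hq.1 (mul_pos two_pos hq.2)

theorem entS_eq_log_rho_log_betaCoef {γ : ℝ} {q : EulerState} (hq : admissible γ q) :
    entS γ q = -(γ - 1) * Real.log (rho q) - Real.log (betaCoef γ q) - Real.log 2 := by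
  rw [entS, betaCoef, Real.log_mul hq.2.ne' (Real.rpow_pos_of_pos hq.1 _).ne',
    Real.log_rpow hq.1, Real.log_div hq.1.ne' (mul_pos two_pos hq.2).ne',
    Real.log_mul two_ne_zero hq.2.ne']
  ring

/-- `lρ` and `lβ` stand for the jumps of `ln ρ` and `ln β`. -/
theorem chandrashekar_flux_jump_identity
    {γ ρ₁ ρ₂ β₁ β₂ u₁ u₂ v₁ v₂ s₁ s₂ lρ lβ ρh βh : ℝ}
    (hγ : γ ≠ 1) (hβ : β₁ + β₂ ≠ 0) (hβh : βh ≠ 0)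
    (hs : s₂ - s₁ = -(γ - 1) * lρ - lβ) (hρh : ρh * lρ = ρ₂ - ρ₁) (hβh' : βh * lβ = β₂ - β₁) :
    ((γ - s₂) / (γ - 1) - β₂ * (u₂ ^ 2 + v₂ ^ 2) - ((γ - s₁) / (γ - 1) - β₁ * (u₁ ^ 2 + v₁ ^ 2)))
        * (ρh * ((u₁ + u₂) / 2))
      + (2 * β₂ * u₂ - 2 * β₁ * u₁)
        * ((u₁ + u₂) / 2 * (ρh * ((u₁ + u₂) / 2)) + (ρ₁ + ρ₂) / 2 / (2 * ((β₁ + β₂) / 2)))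
      + (2 * β₂ * v₂ - 2 * β₁ * v₁) * ((v₁ + v₂) / 2 * (ρh * ((u₁ + u₂) / 2)))
      + (-2 * β₂ - -2 * β₁)
        * ((1 / (2 * (γ - 1) * βh) - (u₁ ^ 2 + v₁ ^ 2 + u₂ ^ 2 + v₂ ^ 2) / 2 / 2)
              * (ρh * ((u₁ + u₂) / 2))
            + (u₁ + u₂) / 2 * ((u₁ + u₂) / 2 * (ρh * ((u₁ + u₂) / 2))
                + (ρ₁ + ρ₂) / 2 / (2 * ((β₁ + β₂) / 2)))
            + (v₁ + v₂) / 2 * ((v₁ + v₂) / 2 * (ρh * ((u₁ + u₂) / 2))))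
      = ρ₂ * u₂ - ρ₁ * u₁ := by
  have hγ' : γ - 1 ≠ 0 := sub_ne_zero.mpr hγ
  -- the remainder cancels `p̃ = ρ̄ / (2 β̄)` against `Δ(βu) - ū Δβ = β̄ Δu`
  linear_combination (norm := skip) (u₁ + u₂) / 2 * hρh
    + ρh * ((u₁ + u₂) / 2) / ((γ - 1) * βh) * hβh' - ρh * ((u₁ + u₂) / 2) / (γ - 1) * hs
  field_simp
  ring

theorem chandrashekarFlux_entropy_conservative {γ : ℝ} (hγ : 1 < γ) {qm qp : EulerState}
    (hm : admissible γ qm) (hp : admissible γ qp) :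
    (entVar γ qp - entVar γ qm) ⬝ᵥ chandrashekarFlux γ qm qp
      = rho qp * uvel qp - rho qm * uvel qm := by
  have hβm := betaCoef_pos hm
  have hβp := betaCoef_pos hp
  have hs : entS γ qp - entS γ qm
      = -(γ - 1) * (Real.log (rho qp) - Real.log (rho qm))
        - (Real.log (betaCoef γ qp) - Real.log (betaCoef γ qm)) := by
    rw [entS_eq_log_rho_log_betaCoef hm, entS_eq_log_rho_log_betaCoef hp]
    ring
  simp only [chandrashekarFlux, entVar, dotProduct, Fin.sum_univ_four, Pi.sub_apply,
    Matrix.cons_val_zero, Matrix.cons_val_one, Matrix.head_cons, Matrix.cons_val_two,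
    Matrix.tail_cons, Matrix.cons_val_three]
  exact chandrashekar_flux_jump_identity hγ.ne' (add_pos hβm hβp).ne'
    (logMean_pos hβm hβp).ne' hs (logMean_mul_log_sub_log hm.1 hp.1)
    (logMean_mul_log_sub_log hβm hβp)

theorem Qmat_posSemidef {γ : ℝ} (hγ : 1 < γ) {lam : Fin 4 → ℝ} (hlam : 0 ≤ lam)
    {q : EulerState} (hq : admissible γ q) : (Qmat γ lam q).PosSemidef := by
  have hS : 0 ≤ ![rho q / (2 * γ), (γ - 1) * rho q / γ, pres γ q, rho q / (2 * γ)] := by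
    have hγ' : 0 < γ - 1 := sub_pos.mpr hγ
    have hγ₀ : 0 < γ := zero_lt_one.trans hγ
    intro i
    fin_cases i <;> simp [div_nonneg, mul_nonneg, hq.1.le, hq.2.le, hγ'.le, hγ₀.le]
  rw [Qmat, Matrix.mul_assoc (eigMat γ q), scalMat, diagonal_mul_diagonal]
  simpa only [conjTranspose_eq_transpose_of_trivial, Pi.mul_def] using
    (PosSemidef.diagonal (mul_nonneg hlam hS)).mul_mul_conjTranspose_same (eigMat γ q)

theorem lamRoeLM_nonneg (γ Mcut : ℝ) (q : EulerState) : 0 ≤ lamRoeLM γ Mcut q := by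
  intro i
  fin_cases i <;> exact abs_nonneg _

theorem es_lm_flux_entropy_stable_general (γ Mcut : ℝ) (hγ : 1 < γ)
    (qm qp qint : EulerState) (hm : admissible γ qm) (hp : admissible γ qp)
    (hint : admissible γ qint) :
    (entVar γ qp - entVar γ qm) ⬝ᵥ
        (chandrashekarFlux γ qm qp
          - (1 / 2 : ℝ) •
            (Qmat γ (lamRoeLM γ Mcut qint) qint).mulVec (entVar γ qp - entVar γ qm))
      ≤ rho qp * uvel qp - rho qm * uvel qm := by
  have hdiss := (Qmat_posSemidef hγ (lamRoeLM_nonneg γ Mcut qint) hint).dotProduct_mulVec_nonneg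
    (entVar γ qp - entVar γ qm)
  rw [star_trivial] at hdiss
  rw [dotProduct_sub, chandrashekarFlux_entropy_conservative hγ hm hp, dotProduct_smul,
    smul_eq_mul]
  linarith

/-- the low Mach modified ES-LM flux
`F^{ES-LM} = F* − ½ Q_LM(q_int)(r(q⁺) − r(q⁻))` with
`Q_LM = R |Λ|^Roe_LM S Rᵀ`, `|Λ|^Roe_LM = diag(|u−c̃|,|u|,|u|,|u+c̃|)`,
`c̃ = c·max(min(M,1),M_cut)`, is entropy stable. -/
theorem es_lm_flux_entropy_stable (γ Mcut : ℝ) (hγ : 1 < γ)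
    (hMcut : Mcut ∈ Set.Icc (0 : ℝ) 1)
    (qm qp qint : EulerState) (hm : admissible γ qm) (hp : admissible γ qp)
    (hint : admissible γ qint) :
    (entVar γ qp - entVar γ qm) ⬝ᵥ
        (chandrashekarFlux γ qm qp
          - (1 / 2 : ℝ) •
            (Qmat γ (lamRoeLM γ Mcut qint) qint).mulVec (entVar γ qp - entVar γ qm))
      ≤ rho qp * uvel qp - rho qm * uvel qm :=
  es_lm_flux_entropy_stable_general γ Mcut hγ qm qp qint hm hp hint
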